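/- Let mu be a probability measure on [0,1] with density a in the |D|-domain. Define the Battacharyya functional B(a) = integral over [0,1] of sqrt(1-z^2) d mu(z) and the entropy functional H(a) = integral over [0,1] of h2((1-z)/2) d mu(z). Then B(a)^2 <= H(a) <= B(a). -/

import Mathlib

open MeasureTheory

/-- The binary entropy function. -/
noncomputable def h2 (x : ℝ) : ℝ := -(x * Real.logb 2 x) - (1 - x) * Real.logb 2 (1 - x)

/-- The Battacharyya functional of a `|D|`-distribution. -/
noncomputable def batta (μ : Measure ℝ) : ℝ := ∫ z, Real.sqrt (1 - z^2) ∂μ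

/-- The entropy functional of a `|D|`-distribution. -/
noncomputable def entF (μ : Measure ℝ) : ℝ := ∫ z, h2 ((1 - z)/2) ∂μ

/-!
With `p = (1 - z) / 2` one has `1 - z ^ 2 = 4 p (1 - p)`, so in nats the two pointwise bounds read
`4 log 2 · p (1 - p) ≤ binEntropy p ≤ 2 log 2 · √(p (1 - p))` on `[0, 1]`. In both cases the
difference `F` of the two sides is symmetric about `1 / 2`, vanishes at `0` and `1 / 2`, and its
second derivative changes sign exactly where `p (1 - p)` crosses a constant. Hence `F` is concave
near the endpoints and convex in the middle, which forces `F ≥ 0`. Integrating against `μ` gives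
`H ≤ B`, and Jensen's inequality gives `B ^ 2 ≤ ∫ (1 - z ^ 2) dμ ≤ H`.
-/

open Real Set

theorem nonneg_of_symm_of_concaveOn_of_convexOn {F : ℝ → ℝ} {a : ℝ}
    (ha0 : 0 < a) (ha : a ≤ 1 / 2)
    (hsymm : ∀ p, F (1 - p) = F p) (hF0 : F 0 = 0) (hFhalf : F (1 / 2) = 0)
    (hconc : ConcaveOn ℝ (Icc 0 a) F) (hconv : ConvexOn ℝ (Icc a (1 - a)) F)
    {p : ℝ} (hp : p ∈ Icc (0 : ℝ) 1) : 0 ≤ F p := by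
  have hmid : ∀ x ∈ Icc a (1 - a), 0 ≤ F x := by
    intro x hx
    have hx' : 1 - x ∈ Icc a (1 - a) := ⟨by linarith [hx.2], by linarith [hx.1]⟩
    have h := hconv.2 hx hx' (by norm_num : (0 : ℝ) ≤ 1 / 2) (by norm_num : (0 : ℝ) ≤ 1 / 2)
      (by norm_num)
    simp only [smul_eq_mul, hsymm] at h
    rw [show 1 / 2 * x + 1 / 2 * (1 - x) = (1 / 2 : ℝ) by ring, hFhalf] at h
    linarith
  have hedge : ∀ x ∈ Icc 0 a, 0 ≤ F x := fun x hx =>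
    (le_min hF0.ge (hmid a ⟨le_rfl, by linarith⟩)).trans
      (hconc.min_le_of_mem_Icc (left_mem_Icc.2 ha0.le) (right_mem_Icc.2 ha0.le) hx)
  rcases le_or_gt p a with hpa | hpa
  · exact hedge p ⟨hp.1, hpa⟩
  rcases le_or_gt p (1 - a) with hpa' | hpa'
  · exact hmid p ⟨hpa.le, hpa'⟩
  · rw [← hsymm p]
    exact hedge (1 - p) ⟨by linarith [hp.2], by linarith⟩

theorem exists_mul_one_sub_eq {c : ℝ} (hc0 : 0 < c) (hc : c ≤ 1 / 4) :
    ∃ a, 0 < a ∧ a ≤ 1 / 2 ∧ a * (1 - a) = c := by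
  have hd : 0 ≤ 1 - 4 * c := by linarith
  have hsq := sq_sqrt hd
  have hlt : √(1 - 4 * c) < 1 := (sqrt_lt' one_pos).2 (by linarith)
  refine ⟨(1 - √(1 - 4 * c)) / 2, by linarith, by linarith [sqrt_nonneg (1 - 4 * c)], ?_⟩
  linear_combination (-1 / 4 : ℝ) * hsq

theorem nonneg_of_symm_of_deriv2_sign {F F' F'' : ℝ → ℝ} {c : ℝ}
    (hc0 : 0 < c) (hc : c ≤ 1 / 4)
    (hsymm : ∀ p, F (1 - p) = F p) (hF0 : F 0 = 0) (hFhalf : F (1 / 2) = 0)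
    (hcont : ContinuousOn F (Icc 0 1))
    (hF' : ∀ x ∈ Ioo (0 : ℝ) 1, HasDerivAt F (F' x) x)
    (hF'' : ∀ x ∈ Ioo (0 : ℝ) 1, HasDerivAt F' (F'' x) x)
    (hconc : ∀ x ∈ Ioo (0 : ℝ) 1, x * (1 - x) ≤ c → F'' x ≤ 0)
    (hconv : ∀ x ∈ Ioo (0 : ℝ) 1, c ≤ x * (1 - x) → 0 ≤ F'' x)
    {p : ℝ} (hp : p ∈ Icc (0 : ℝ) 1) : 0 ≤ F p := by
  obtain ⟨a, ha0, ha, rfl⟩ := exists_mul_one_sub_eq hc0 hc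
  have hedge : Ioo 0 a ⊆ Ioo (0 : ℝ) 1 := Ioo_subset_Ioo_right (by linarith)
  have hmid : Ioo a (1 - a) ⊆ Ioo (0 : ℝ) 1 := Ioo_subset_Ioo ha0.le (by linarith)
  refine nonneg_of_symm_of_concaveOn_of_convexOn ha0 ha hsymm hF0 hFhalf ?_ ?_ hp
  · refine concaveOn_of_hasDerivWithinAt2_nonpos (f' := F') (f'' := F'') (convex_Icc _ _)
      (hcont.mono (Icc_subset_Icc_right (by linarith))) ?_ ?_ ?_ <;> rw [interior_Icc]
    · exact fun x hx => (hF' x (hedge hx)).hasDerivWithinAt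
    · exact fun x hx => (hF'' x (hedge hx)).hasDerivWithinAt
    · exact fun x hx => hconc x (hedge hx) (by nlinarith [hx.1, hx.2])
  · refine convexOn_of_hasDerivWithinAt2_nonneg (f' := F') (f'' := F'') (convex_Icc _ _)
      (hcont.mono (Icc_subset_Icc ha0.le (by linarith))) ?_ ?_ ?_ <;> rw [interior_Icc]
    · exact fun x hx => (hF' x (hmid hx)).hasDerivWithinAt
    · exact fun x hx => (hF'' x (hmid hx)).hasDerivWithinAt
    · exact fun x hx => hconv x (hmid hx) (by nlinarith [hx.1, hx.2])


theorem hasDerivAt_log_one_sub_sub_log {x : ℝ} (h0 : x ≠ 0) (h1 : x ≠ 1) :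
    HasDerivAt (fun p => log (1 - p) - log p) (-1 / (x * (1 - x))) x := by
  have h1' : 1 - x ≠ 0 := sub_ne_zero.2 h1.symm
  refine ((((hasDerivAt_id' x).const_sub 1).log h1').fun_sub (hasDerivAt_log h0)).congr_deriv ?_
  field_simp
  ring

theorem hasDerivAt_sqrt_mul_one_sub {x : ℝ} (hx : x * (1 - x) ≠ 0) :
    HasDerivAt (fun p => √(p * (1 - p))) ((1 - 2 * x) / (2 * √(x * (1 - x)))) x :=
  (((hasDerivAt_id' x).fun_mul ((hasDerivAt_id' x).const_sub 1)).sqrt hx).congr_deriv (by ring)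

theorem hasDerivAt_one_sub_two_mul_div_sqrt {x : ℝ} (hx : 0 < x * (1 - x)) :
    HasDerivAt (fun p => (1 - 2 * p) / √(p * (1 - p))) (-1 / (2 * √(x * (1 - x)) ^ 3)) x := by
  have hs : 0 < √(x * (1 - x)) := sqrt_pos.2 hx
  refine ((((hasDerivAt_id' x).const_mul 2).const_sub 1).fun_div
    (hasDerivAt_sqrt_mul_one_sub hx.ne') hs.ne').congr_deriv ?_
  field_simp
  linear_combination (-4 : ℝ) * sq_sqrt hx.le

theorem four_mul_log_two_mul_le_binEntropy {p : ℝ} (hp : p ∈ Icc (0 : ℝ) 1) :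
    4 * log 2 * (p * (1 - p)) ≤ binEntropy p := by
  have hm {x : ℝ} (hx : x ∈ Ioo (0 : ℝ) 1) : 0 < x * (1 - x) := mul_pos hx.1 (sub_pos.2 hx.2)
  have hc : 0 < 8 * log 2 := by positivity
  suffices 0 ≤ binEntropy p - 4 * log 2 * (p * (1 - p)) by linarith
  refine nonneg_of_symm_of_deriv2_sign (F := fun p => binEntropy p - 4 * log 2 * (p * (1 - p)))
    (F' := fun x => (log (1 - x) - log x) - 4 * log 2 * (1 - 2 * x))
    (F'' := fun x => -1 / (x * (1 - x)) + 8 * log 2) (c := 1 / (8 * log 2))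
    (by positivity) ?_ (fun p => ?_) (by simp) ?_ (by fun_prop) (fun x hx => ?_) (fun x hx => ?_)
    (fun x hx h => ?_) (fun x hx h => ?_) hp
  · rw [div_le_div_iff₀ hc four_pos]
    linarith [log_two_gt_d9]
  · simp only [binEntropy_one_sub]
    ring
  · rw [one_div, binEntropy_two_inv]
    ring
  · exact ((hasDerivAt_binEntropy hx.1.ne' hx.2.ne).fun_sub
      (((hasDerivAt_id' x).fun_mul ((hasDerivAt_id' x).const_sub 1)).const_mul _)).congr_deriv
        (by ring)
  · exact ((hasDerivAt_log_one_sub_sub_log hx.1.ne' hx.2.ne).fun_sub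
      ((((hasDerivAt_id' x).const_mul 2).const_sub 1).const_mul _)).congr_deriv (by ring)
  · have : 8 * log 2 ≤ 1 / (x * (1 - x)) := by
      rw [le_div_iff₀ (hm hx)]
      rw [le_div_iff₀ hc] at h
      linarith
    rw [neg_div]
    linarith
  · have : 1 / (x * (1 - x)) ≤ 8 * log 2 := by
      rw [div_le_iff₀ (hm hx)]
      rw [div_le_iff₀ hc] at h
      linarith
    rw [neg_div]
    linarith

theorem binEntropy_le_two_mul_log_two_mul_sqrt {p : ℝ} (hp : p ∈ Icc (0 : ℝ) 1) :
    binEntropy p ≤ 2 * log 2 * √(p * (1 - p)) := by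
  have hm {x : ℝ} (hx : x ∈ Ioo (0 : ℝ) 1) : 0 < x * (1 - x) := mul_pos hx.1 (sub_pos.2 hx.2)
  have hF'' {x : ℝ} (hx : x ∈ Ioo (0 : ℝ) 1) :
      log 2 * (-1 / (2 * √(x * (1 - x)) ^ 3)) - -1 / (x * (1 - x)) =
        (2 * √(x * (1 - x)) - log 2) / (2 * √(x * (1 - x)) ^ 3) := by
    obtain ⟨s, hs, hms⟩ : ∃ s, 0 < s ∧ x * (1 - x) = s ^ 2 :=
      ⟨_, sqrt_pos.2 (hm hx), (sq_sqrt (hm hx).le).symm⟩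
    rw [hms, sqrt_sq hs.le]
    field_simp
    ring
  suffices 0 ≤ 2 * log 2 * √(p * (1 - p)) - binEntropy p by linarith
  refine nonneg_of_symm_of_deriv2_sign (F := fun p => 2 * log 2 * √(p * (1 - p)) - binEntropy p)
    (F' := fun x => log 2 * ((1 - 2 * x) / √(x * (1 - x))) - (log (1 - x) - log x))
    (F'' := fun x => log 2 * (-1 / (2 * √(x * (1 - x)) ^ 3)) - -1 / (x * (1 - x)))
    (c := log 2 ^ 2 / 4) (by positivity) (by nlinarith [log_pos one_lt_two, log_two_lt_d9])
    (fun p => ?_) (by simp) ?_ (by fun_prop)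
    (fun x hx => ?_) (fun x hx => ?_) (fun x hx h => ?_) (fun x hx h => ?_) hp
  · simp only [binEntropy_one_sub]
    ring_nf
  · rw [show (1 / 2 : ℝ) * (1 - 1 / 2) = (1 / 2) ^ 2 by norm_num, sqrt_sq (by norm_num),
      one_div, binEntropy_two_inv]
    ring
  · have hs : 0 < √(x * (1 - x)) := sqrt_pos.2 (hm hx)
    refine (((hasDerivAt_sqrt_mul_one_sub (hm hx).ne').const_mul _).fun_sub
      (hasDerivAt_binEntropy hx.1.ne' hx.2.ne)).congr_deriv ?_
    field_simp
  · exact ((hasDerivAt_one_sub_two_mul_div_sqrt (hm hx)).const_mul _).fun_sub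
      (hasDerivAt_log_one_sub_sub_log hx.1.ne' hx.2.ne)
  · have : √(x * (1 - x)) ≤ log 2 / 2 := (sqrt_le_left (by positivity)).2 (by linarith)
    rw [hF'' hx]
    exact div_nonpos_of_nonpos_of_nonneg (by linarith) (by positivity)
  · have : log 2 / 2 ≤ √(x * (1 - x)) := (le_sqrt (by positivity) (hm hx).le).2 (by linarith)
    rw [hF'' hx]
    exact div_nonneg (by linarith) (by positivity)

theorem h2_eq_binEntropy_div_log_two (x : ℝ) : h2 x = binEntropy x / log 2 := by
  simp only [h2, binEntropy, logb, log_inv]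
  ring

theorem one_sub_sq_le_h2 {z : ℝ} (hz : z ∈ Icc (-1 : ℝ) 1) :
    1 - z ^ 2 ≤ h2 ((1 - z) / 2) := by
  have hp : (1 - z) / 2 ∈ Icc (0 : ℝ) 1 := ⟨by linarith [hz.2], by linarith [hz.1]⟩
  rw [h2_eq_binEntropy_div_log_two, le_div_iff₀ (log_pos one_lt_two)]
  linarith [four_mul_log_two_mul_le_binEntropy hp]

theorem h2_le_sqrt_one_sub_sq {z : ℝ} (hz : z ∈ Icc (-1 : ℝ) 1) :
    h2 ((1 - z) / 2) ≤ √(1 - z ^ 2) := by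
  have hp : (1 - z) / 2 ∈ Icc (0 : ℝ) 1 := ⟨by linarith [hz.2], by linarith [hz.1]⟩
  have hsqrt : √((1 - z) / 2 * (1 - (1 - z) / 2)) = √(1 - z ^ 2) / 2 := by
    rw [show (1 - z) / 2 * (1 - (1 - z) / 2) = (1 - z ^ 2) / 2 ^ 2 by ring,
      sqrt_div' _ (by positivity), sqrt_sq zero_le_two]
  rw [h2_eq_binEntropy_div_log_two, div_le_iff₀ (log_pos one_lt_two)]
  have h := binEntropy_le_two_mul_log_two_mul_sqrt hp
  rw [hsqrt] at h
  linarith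

/-- For a probability measure on `[0,1]` (a `|D|`-distribution),
`B(a)^2 ≤ H(a) ≤ B(a)`. -/
theorem entropy_vs_battacharyya (μ : Measure ℝ) [IsProbabilityMeasure μ]
    (hsupp : μ (Set.Icc (0:ℝ) 1)ᶜ = 0) :
    (batta μ)^2 ≤ entF μ ∧ entF μ ≤ batta μ := by
  have hae : ∀ᵐ z ∂μ, z ∈ Icc (-1 : ℝ) 1 :=
    measure_mono_null (compl_subset_compl.2 (Icc_subset_Icc_left (by norm_num))) hsupp
  have hsqrt_mem (z : ℝ) : √(1 - z ^ 2) ∈ Icc 0 1 :=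
    ⟨sqrt_nonneg _, sqrt_le_one.2 (by nlinarith)⟩
  have hB : Integrable (fun z => √(1 - z ^ 2)) μ :=
    .of_bound (by fun_prop) 1 (.of_forall fun z => by
      rw [norm_of_nonneg (hsqrt_mem z).1]; exact (hsqrt_mem z).2)
  have hB2 : Integrable (fun z => √(1 - z ^ 2) ^ 2) μ :=
    .of_bound (by fun_prop) 1 (.of_forall fun z => by
      rw [norm_pow, norm_of_nonneg (hsqrt_mem z).1]
      exact pow_le_one₀ (hsqrt_mem z).1 (hsqrt_mem z).2)
  have hsq : (fun z => √(1 - z ^ 2) ^ 2) =ᵐ[μ] fun z => 1 - z ^ 2 := by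
    filter_upwards [hae] with z hz using sq_sqrt (by nlinarith [hz.1, hz.2])
  have hS : Integrable (fun z => 1 - z ^ 2) μ := hB2.congr hsq
  have hlow : (fun z => 1 - z ^ 2) ≤ᵐ[μ] fun z => h2 ((1 - z) / 2) :=
    hae.mono fun z => one_sub_sq_le_h2
  have hup : (fun z => h2 ((1 - z) / 2)) ≤ᵐ[μ] fun z => √(1 - z ^ 2) :=
    hae.mono fun z => h2_le_sqrt_one_sub_sq
  have hH : Integrable (fun z => h2 ((1 - z) / 2)) μ :=
    integrable_of_le_of_le (by simp only [h2_eq_binEntropy_div_log_two]; fun_prop) hlow hup hS hB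
  refine ⟨?_, integral_mono_ae hH hB hup⟩
  calc batta μ ^ 2 ≤ ∫ z, √(1 - z ^ 2) ^ 2 ∂μ :=
        (convexOn_pow 2).map_integral_le (continuousOn_pow 2) isClosed_Ici
          (.of_forall fun z => (hsqrt_mem z).1) hB hB2
    _ = ∫ z, 1 - z ^ 2 ∂μ := integral_congr_ae hsq
    _ ≤ entF μ := integral_mono_ae hS hH hlow
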